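/- Let X be a real n×p matrix and let a, k be integers with 1 ≤ a ≤ n, k ≤ p. Let V* ∈ ℝ^{n×a} with V*ᵀV* = I_a minimize ‖X − V·Vᵀ·X‖_F over all V ∈ ℝ^{n×a} with VᵀV = I_a, set ε := X − V*·V*ᵀ·X, and let σ be a set of k indices of columns of ε with the largest Euclidean norms. Let s° be an optimal solution of Problem (2) and let s^A be an optimal solution of Problem (7) with parameter η = Σ_{i∈σ}‖ε_i‖². Then π(s°) − π(s^A) ≤ Σ_{i∈σ}‖ε_i‖². -/

import Mathlib

open Matrix BigOperators

noncomputable section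

/-- Squared Frobenius norm of a real matrix. -/
def frobSq {n m : ℕ} (M : Matrix (Fin n) (Fin m) ℝ) : ℝ := ∑ i, ∑ j, (M i j) ^ 2

/-- A vector is binary if each entry is 0 or 1. -/
def IsBinary {p : ℕ} (s : Fin p → ℝ) : Prop := ∀ i, s i = 0 ∨ s i = 1

/-- Stiefel set: matrices with orthonormal columns. -/
def Stiefel (n a : ℕ) : Set (Matrix (Fin n) (Fin a) ℝ) := {U | Uᵀ * U = 1}

/-- Squared Euclidean norm of column `i` of `X`. -/
def colNormSq {n p : ℕ} (X : Matrix (Fin n) (Fin p) ℝ) (i : Fin p) : ℝ :=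
  ∑ r, (X r i) ^ 2

/-- μ(s) = Σ_i s_i ‖X_i‖². -/
def muF {n p : ℕ} (X : Matrix (Fin n) (Fin p) ℝ) (s : Fin p → ℝ) : ℝ :=
  ∑ i, s i * colNormSq X i

/-- η(s) = inf over Stiefel matrices U of ‖X diag(s) − U Uᵀ X diag(s)‖_F². -/
def etaF {n p : ℕ} (X : Matrix (Fin n) (Fin p) ℝ) (a : ℕ) (s : Fin p → ℝ) : ℝ :=
  sInf ((fun U : Matrix (Fin n) (Fin a) ℝ =>
    frobSq (X * diagonal s - U * Uᵀ * (X * diagonal s))) '' Stiefel n a)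

/-- π(s) = sup over Stiefel matrices U of ‖U Uᵀ X diag(s)‖_F². -/
def piF {n p : ℕ} (X : Matrix (Fin n) (Fin p) ℝ) (a : ℕ) (s : Fin p → ℝ) : ℝ :=
  sSup ((fun U : Matrix (Fin n) (Fin a) ℝ =>
    frobSq (U * Uᵀ * (X * diagonal s))) '' Stiefel n a)

/-- Feasibility for Problem (2): binary with at most k ones. -/
def Feas {p : ℕ} (k : ℕ) (s : Fin p → ℝ) : Prop :=
  IsBinary s ∧ ∑ i, s i ≤ (k : ℝ)

/-- Optimality for Problem (2): feasible and maximizing π. -/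
def Opt2 {n p : ℕ} (X : Matrix (Fin n) (Fin p) ℝ) (a k : ℕ) (s : Fin p → ℝ) : Prop :=
  Feas k s ∧ ∀ s' : Fin p → ℝ, Feas k s' → piF X a s' ≤ piF X a s

/-- Feasibility for Problem (7) with parameter η. -/
def Feas7 {n p : ℕ} (X : Matrix (Fin n) (Fin p) ℝ) (a k : ℕ) (η : ℝ) (s : Fin p → ℝ) : Prop :=
  Feas k s ∧ etaF X a s ≤ η

/-- Optimality for Problem (7): feasible and maximizing μ. -/
def Opt7 {n p : ℕ} (X : Matrix (Fin n) (Fin p) ℝ) (a k : ℕ) (η : ℝ) (s : Fin p → ℝ) : Prop :=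
  Feas7 X a k η s ∧ ∀ s' : Fin p → ℝ, Feas7 X a k η s' → muF X s' ≤ muF X s

/-! Projecting onto the span of orthonormal columns splits the squared Frobenius norm
(Pythagoras), so `π(s) + η(s) = ‖X diag(s)‖_F² = μ(s)` for binary `s`. Projecting the selected
columns of `X` onto `V` leaves the residual `ε diag(s)`, whose squared norm is at most the total
of the `k` largest `‖ε_i‖²`; hence `s°` is feasible for Problem (7) and `μ(s°) ≤ μ(s^A)`.
Therefore `π(s°) - π(s^A) = μ(s°) - η(s°) - μ(s^A) + η(s^A) ≤ η(s^A) ≤ Σ_{i∈σ} ‖ε_i‖²`. -/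

open Finset

theorem Finset.sum_le_sum_of_card_le_of_forall_le {α M : Type*} [DecidableEq α]
    [AddCommMonoid M] [LinearOrder M] [IsOrderedAddMonoid M] {f : α → M} {s t : Finset α}
    (hcard : #s ≤ #t) (hf : ∀ i ∈ t, 0 ≤ f i) (hmax : ∀ i ∈ t, ∀ j ∉ t, f j ≤ f i) :
    ∑ i ∈ s, f i ≤ ∑ i ∈ t, f i := by
  have hcard_sdiff : #(s \ t) ≤ #(t \ s) := by
    have hs := card_sdiff_add_card_inter s t
    have ht := card_sdiff_add_card_inter t s
    rw [inter_comm] at ht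
    omega
  have hsdiff : ∑ i ∈ s \ t, f i ≤ ∑ i ∈ t \ s, f i := by
    obtain hempty | hne := (t \ s).eq_empty_or_nonempty
    · rw [hempty, card_empty, Nat.le_zero, card_eq_zero] at hcard_sdiff
      rw [hempty, hcard_sdiff]
    obtain ⟨i₀, hi₀, hmin⟩ := (t \ s).exists_min_image f hne
    have hi₀t : i₀ ∈ t := (mem_sdiff.mp hi₀).1
    calc ∑ i ∈ s \ t, f i
        ≤ #(s \ t) • f i₀ :=
          sum_le_card_nsmul _ _ _ fun j hj => hmax i₀ hi₀t j (mem_sdiff.mp hj).2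
      _ ≤ #(t \ s) • f i₀ := nsmul_le_nsmul_left (hf i₀ hi₀t) hcard_sdiff
      _ ≤ ∑ i ∈ t \ s, f i := card_nsmul_le_sum _ _ _ hmin
  rw [← sum_inter_add_sum_sdiff s t f, ← sum_inter_add_sum_sdiff t s f, inter_comm]
  gcongr

namespace IsBinary

variable {p : ℕ} {s : Fin p → ℝ}

theorem sum_mul_eq_sum_filter (hs : IsBinary s) (f : Fin p → ℝ) :
    ∑ i, s i * f i = ∑ i with s i = 1, f i := by
  rw [sum_filter]
  refine sum_congr rfl fun i _ => ?_
  rcases hs i with h | h <;> simp [h]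

theorem sum_eq_card (hs : IsBinary s) : ∑ i, s i = #{i | s i = 1} := by
  simpa using hs.sum_mul_eq_sum_filter 1

theorem sum_mul_le_sum_of_card_le {k : ℕ} (hs : IsBinary s) (hsk : ∑ i, s i ≤ k)
    {f : Fin p → ℝ} (hf : ∀ i, 0 ≤ f i) {σ : Finset (Fin p)} (hσcard : #σ = k)
    (hσmax : ∀ i ∈ σ, ∀ j ∉ σ, f j ≤ f i) :
    ∑ i, s i * f i ≤ ∑ i ∈ σ, f i := by
  rw [hs.sum_mul_eq_sum_filter]
  refine sum_le_sum_of_card_le_of_forall_le ?_ (fun i _ => hf i) hσmax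
  rw [hσcard]
  exact_mod_cast hs.sum_eq_card ▸ hsk

end IsBinary

section Frobenius

variable {n m a p : ℕ}

theorem frobSq_nonneg (M : Matrix (Fin n) (Fin m) ℝ) : 0 ≤ frobSq M :=
  sum_nonneg fun _ _ => sum_nonneg fun _ _ => sq_nonneg _

theorem frobSq_eq_trace (M : Matrix (Fin n) (Fin m) ℝ) : frobSq M = (Mᵀ * M).trace := by
  rw [frobSq, sum_comm]
  simp [trace, mul_apply, sq]

theorem colNormSq_nonneg (M : Matrix (Fin n) (Fin p) ℝ) (i : Fin p) : 0 ≤ colNormSq M i :=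
  sum_nonneg fun _ _ => sq_nonneg _

theorem frobSq_mul_diagonal {s : Fin p → ℝ} (hs : IsBinary s) (M : Matrix (Fin n) (Fin p) ℝ) :
    frobSq (M * diagonal s) = muF M s := by
  rw [frobSq, sum_comm, muF]
  refine sum_congr rfl fun j _ => ?_
  rw [colNormSq, mul_sum]
  refine sum_congr rfl fun i _ => ?_
  rcases hs j with h | h <;> simp [mul_diagonal, h]

theorem frobSq_proj_add_frobSq_sub_proj {U : Matrix (Fin n) (Fin a) ℝ} (hU : U ∈ Stiefel n a)
    (M : Matrix (Fin n) (Fin m) ℝ) :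
    frobSq (U * Uᵀ * M) + frobSq (M - U * Uᵀ * M) = frobSq M := by
  set P := U * Uᵀ
  have hPt : Pᵀ = P := by simp [P, transpose_mul]
  have hPP : P * P = P := by
    simp only [P, Matrix.mul_assoc, ← Matrix.mul_assoc Uᵀ U, hU.out, Matrix.one_mul]
  have hPM : (P * M)ᵀ * (P * M) = Mᵀ * (P * M) := by
    rw [transpose_mul, hPt, Matrix.mul_assoc, ← Matrix.mul_assoc P P M, hPP]
  have hMP : (P * M)ᵀ * M = Mᵀ * (P * M) := by
    rw [transpose_mul, hPt, Matrix.mul_assoc]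
  rw [frobSq_eq_trace, frobSq_eq_trace, frobSq_eq_trace, transpose_sub, Matrix.sub_mul,
    Matrix.mul_sub, Matrix.mul_sub, hPM, hMP]
  simp only [trace_sub]
  ring

theorem stiefel_nonempty (han : a ≤ n) : (Stiefel n a).Nonempty := by
  refine ⟨of fun i j => if i = Fin.castLE han j then 1 else 0, ?_⟩
  ext j j'
  simp [mul_apply, one_apply, Fin.castLE_inj, eq_comm]

end Frobenius

section ProjectionValues

variable {n p a : ℕ} (X : Matrix (Fin n) (Fin p) ℝ) (s : Fin p → ℝ)

theorem etaF_nonneg : 0 ≤ etaF X a s :=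
  Real.sInf_nonneg <| by
    rintro _ ⟨U, -, rfl⟩
    exact frobSq_nonneg _

theorem etaF_le {U : Matrix (Fin n) (Fin a) ℝ} (hU : U ∈ Stiefel n a) :
    etaF X a s ≤ frobSq (X * diagonal s - U * Uᵀ * (X * diagonal s)) :=
  csInf_le ⟨0, by rintro _ ⟨U, -, rfl⟩; exact frobSq_nonneg _⟩ ⟨U, hU, rfl⟩

theorem piF_add_etaF (han : a ≤ n) : piF X a s + etaF X a s = frobSq (X * diagonal s) := by
  set M := X * diagonal s
  have hne := stiefel_nonempty han
  have hpy : ∀ U ∈ Stiefel n a, frobSq (U * Uᵀ * M) + frobSq (M - U * Uᵀ * M) = frobSq M :=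
    fun U hU => frobSq_proj_add_frobSq_sub_proj hU M
  have hle_pi : ∀ U ∈ Stiefel n a, frobSq (U * Uᵀ * M) ≤ piF X a s := fun U hU =>
    le_csSup ⟨frobSq M, by
      rintro _ ⟨V, hV, rfl⟩
      linarith [hpy V hV, frobSq_nonneg (M - V * Vᵀ * M)]⟩ ⟨U, hU, rfl⟩
  have hpi_le : piF X a s ≤ frobSq M - etaF X a s :=
    csSup_le (hne.image _) <| by
      rintro _ ⟨U, hU, rfl⟩
      linarith [hpy U hU, etaF_le X s hU]
  have heta_le : frobSq M - piF X a s ≤ etaF X a s :=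
    le_csInf (hne.image _) <| by
      rintro _ ⟨U, hU, rfl⟩
      linarith [hpy U hU, hle_pi U hU]
  linarith

end ProjectionValues

theorem stmt_8_general {n p : ℕ} (X : Matrix (Fin n) (Fin p) ℝ) (a k : ℕ)
    (han : a ≤ n)
    (V : Matrix (Fin n) (Fin a) ℝ) (hV : Vᵀ * V = 1)
    (ε : Matrix (Fin n) (Fin p) ℝ) (hε : ε = X - V * Vᵀ * X)
    (σ : Finset (Fin p)) (hσcard : σ.card = k)
    (hσmax : ∀ i ∈ σ, ∀ j ∉ σ, colNormSq ε j ≤ colNormSq ε i)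
    (so : Fin p → ℝ) (hso : Opt2 X a k so)
    (sA : Fin p → ℝ) (hsA : Opt7 X a k (∑ i ∈ σ, colNormSq ε i) sA) :
    piF X a so - piF X a sA ≤ ∑ i ∈ σ, colNormSq ε i := by
  obtain ⟨⟨hso_bin, hso_card⟩, -⟩ := hso
  obtain ⟨⟨⟨hsA_bin, -⟩, hsA_eta⟩, hsA_max⟩ := hsA
  have hso_eta : etaF X a so ≤ ∑ i ∈ σ, colNormSq ε i :=
    calc etaF X a so
        ≤ frobSq (X * diagonal so - V * Vᵀ * (X * diagonal so)) := etaF_le X so hV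
      _ = muF ε so := by rw [hε, ← frobSq_mul_diagonal hso_bin, Matrix.sub_mul, Matrix.mul_assoc (V * Vᵀ)]
      _ ≤ ∑ i ∈ σ, colNormSq ε i :=
        hso_bin.sum_mul_le_sum_of_card_le hso_card (colNormSq_nonneg ε) hσcard hσmax
  have hmu : muF X so ≤ muF X sA := hsA_max so ⟨⟨hso_bin, hso_card⟩, hso_eta⟩
  have hso_split := piF_add_etaF X so han
  have hsA_split := piF_add_etaF X sA han
  rw [frobSq_mul_diagonal hso_bin] at hso_split
  rw [frobSq_mul_diagonal hsA_bin] at hsA_split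
  linarith [etaF_nonneg (a := a) X so]

/-- Corollary 8: the optimality gap of Problem (7) run with the a priori
parameter Σ_{i∈σ}‖ε_i‖² is bounded by that parameter. -/
theorem stmt_8 {n p : ℕ} (X : Matrix (Fin n) (Fin p) ℝ) (a k : ℕ)
    (ha1 : 1 ≤ a) (han : a ≤ n) (hkp : k ≤ p)
    (V : Matrix (Fin n) (Fin a) ℝ) (hV : Vᵀ * V = 1)
    (hVopt : ∀ V' ∈ Stiefel n a,
      frobSq (X - V * Vᵀ * X) ≤ frobSq (X - V' * V'ᵀ * X))
    (ε : Matrix (Fin n) (Fin p) ℝ) (hε : ε = X - V * Vᵀ * X)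
    (σ : Finset (Fin p)) (hσcard : σ.card = k)
    (hσmax : ∀ i ∈ σ, ∀ j ∉ σ, colNormSq ε j ≤ colNormSq ε i)
    (so : Fin p → ℝ) (hso : Opt2 X a k so)
    (sA : Fin p → ℝ) (hsA : Opt7 X a k (∑ i ∈ σ, colNormSq ε i) sA) :
    piF X a so - piF X a sA ≤ ∑ i ∈ σ, colNormSq ε i :=
  stmt_8_general X a k han V hV ε hε σ hσcard hσmax so hso sA hsA
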